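/- arXiv:2605.09157 — 3 statements merged into one kernel-verified Lean document; each statement's English description precedes it below -/
import Mathlib

section
/- Let r_max ≥ 0 and let r : ℝ → ℝ be measurable with |r(a)| ≤ r_max for all a ∈ ℝ. Fix μ ∈ ℝ and define g(σ) = ∫ r(a)·φ(a; μ, σ) da for σ > 0. Then g is differentiable on (0, ∞) and for every σ > 0 one has σ·g′(σ) = ∫ r(σ·b + μ)·(b² − 1)·φ(b; 0, 1) db, where the right-hand integral is with respect to Lebesgue measure in b. -/
/-!
Differentiate under the integral sign. For `0 < t ≤ s ≤ T`, the `s`-derivative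
`φ(a; μ, s) · ((a-μ)² - s²)/s³` of the density is bounded by
`(T/t) · φ(a; μ, T) · ((a-μ)² + T²)/t³`, which is integrable, and `r` is bounded. The
substitution `a = σb + μ` then turns `σ g'(σ)` into an integral against `φ(·; 0, 1)`.
-/

open MeasureTheory Real

noncomputable def gpdf (μ σ a : ℝ) : ℝ :=
  (Real.sqrt (2 * Real.pi * σ ^ 2))⁻¹ * Real.exp (-((a - μ) ^ 2) / (2 * σ ^ 2))

namespace gpdf

theorem eq_gaussianPDFReal (μ σ : ℝ) :
    gpdf μ σ = ProbabilityTheory.gaussianPDFReal μ ⟨σ ^ 2, sq_nonneg σ⟩ :=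
  rfl

theorem nonneg (μ σ a : ℝ) : 0 ≤ gpdf μ σ a := by
  rw [eq_gaussianPDFReal]; exact ProbabilityTheory.gaussianPDFReal_nonneg _ _ _

theorem measurable (μ σ : ℝ) : Measurable (gpdf μ σ) := by
  rw [eq_gaussianPDFReal]; exact ProbabilityTheory.measurable_gaussianPDFReal _ _

theorem integrable (μ σ : ℝ) : Integrable (gpdf μ σ) := by
  rw [eq_gaussianPDFReal]; exact ProbabilityTheory.integrable_gaussianPDFReal _ _

theorem eq_of_pos (μ a : ℝ) {σ : ℝ} (hσ : 0 < σ) :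
    gpdf μ σ a = (√(2 * π))⁻¹ * (σ⁻¹ * exp (-((a - μ) ^ 2) / (2 * σ ^ 2))) := by
  rw [gpdf, sqrt_mul (by positivity), sqrt_sq hσ.le, mul_inv]
  ring

theorem comp_mul_add {σ : ℝ} (hσ : 0 < σ) (μ b : ℝ) :
    gpdf μ σ (σ * b + μ) = σ⁻¹ * gpdf 0 1 b := by
  have hexponent : -((σ * b + μ - μ) ^ 2) / (2 * σ ^ 2) = -((b - 0) ^ 2) / (2 * 1 ^ 2) := by
    field_simp
    ring
  rw [eq_of_pos μ _ hσ, eq_of_pos 0 b one_pos, hexponent]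
  ring

theorem integrable_sq_mul (μ σ : ℝ) : Integrable fun a => (a - μ) ^ 2 * gpdf μ σ a := by
  rcases eq_or_ne σ 0 with rfl | hσ
  · simp [gpdf]
  have hb : 0 < (2 * σ ^ 2)⁻¹ := by positivity
  have h := ((integrable_rpow_mul_exp_neg_mul_sq hb (s := 2) (by norm_num)).comp_sub_right μ
    ).const_mul (√(2 * π * σ ^ 2))⁻¹
  refine h.congr (ae_of_all _ fun a => ?_)
  simp only [gpdf, rpow_two]
  ring_nf

/-- The exponential factor increases with `σ`; only the prefactor `σ⁻¹` costs `T / t`. -/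
theorem le_div_mul_of_le_of_le (μ a : ℝ) {t s T : ℝ} (ht : 0 < t) (hts : t ≤ s)
    (hsT : s ≤ T) : gpdf μ s a ≤ T / t * gpdf μ T a := by
  have hs : 0 < s := ht.trans_le hts
  have hT : 0 < T := hs.trans_le hsT
  rw [eq_of_pos μ a hs, eq_of_pos μ a hT, mul_left_comm (T / t)]
  gcongr _ * ?_
  calc s⁻¹ * exp (-((a - μ) ^ 2) / (2 * s ^ 2))
      ≤ t⁻¹ * exp (-((a - μ) ^ 2) / (2 * T ^ 2)) := by
        gcongr ?_ * exp ?_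
        · exact inv_anti₀ ht hts
        · rw [neg_div, neg_div, neg_le_neg_iff]
          gcongr
    _ = T / t * (T⁻¹ * exp (-((a - μ) ^ 2) / (2 * T ^ 2))) := by field_simp

theorem hasDerivAt_sigma (μ a : ℝ) {σ : ℝ} (hσ : 0 < σ) :
    HasDerivAt (fun s => gpdf μ s a) (gpdf μ σ a * (((a - μ) ^ 2 - σ ^ 2) / σ ^ 3)) σ := by
  set c := (a - μ) ^ 2
  have hexp : HasDerivAt (fun s : ℝ => exp (-c / (2 * s ^ 2))) _ σ :=
    ((hasDerivAt_const σ (-c)).div ((hasDerivAt_pow 2 σ).const_mul 2) (by positivity)).exp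
  have h := ((hasDerivAt_inv hσ.ne').mul hexp).const_mul (√(2 * π))⁻¹
  have hfun : (fun s => gpdf μ s a) =ᶠ[nhds σ]
      fun s => (√(2 * π))⁻¹ * (s⁻¹ * exp (-c / (2 * s ^ 2))) :=
    (eventually_gt_nhds hσ).mono fun s hs => eq_of_pos μ a hs
  refine (h.congr_of_eventuallyEq hfun).congr_deriv ?_
  rw [eq_of_pos μ a hσ, Pi.div_apply]
  field_simp
  ring

end gpdf

theorem abs_sub_sq_div_pow_three_le {x t s T : ℝ} (ht : 0 < t) (hts : t ≤ s) (hsT : s ≤ T) :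
    |(x ^ 2 - s ^ 2) / s ^ 3| ≤ (x ^ 2 + T ^ 2) / t ^ 3 := by
  have hs : 0 < s := ht.trans_le hts
  rw [abs_div, abs_of_pos (by positivity : 0 < s ^ 3)]
  gcongr
  rw [abs_le]
  constructor <;> nlinarith [sq_nonneg x]

theorem integral_comp_mul_add_of_pos {E : Type*} [NormedAddCommGroup E] [NormedSpace ℝ E]
    (f : ℝ → E) {σ : ℝ} (hσ : 0 < σ) (μ : ℝ) :
    ∫ b, f (σ * b + μ) = σ⁻¹ • ∫ a, f a := by
  rw [Measure.integral_comp_mul_left (fun y => f (y + μ)) σ, integral_add_right_eq_self,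
    abs_of_pos (inv_pos.2 hσ)]

theorem hasDerivAt_integral_mul_gpdf {r : ℝ → ℝ} {C : ℝ} (hr : Measurable r)
    (hC : ∀ a, |r a| ≤ C) (μ : ℝ) {σ : ℝ} (hσ : 0 < σ) :
    HasDerivAt (fun s => ∫ a, r a * gpdf μ s a)
      (∫ a, r a * (gpdf μ σ a * (((a - μ) ^ 2 - σ ^ 2) / σ ^ 3))) σ := by
  have hC0 : 0 ≤ C := (abs_nonneg _).trans (hC 0)
  have hr_bdd : ∀ᵐ a, ‖r a‖ ≤ C := ae_of_all _ hC
  obtain ⟨t, T, ht, htσ, hσT⟩ : ∃ t T : ℝ, 0 < t ∧ t < σ ∧ σ < T :=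
    ⟨σ / 2, 2 * σ, by positivity, by linarith, by linarith⟩
  have hbound :
      Integrable fun a => C * (T / t * gpdf μ T a * (((a - μ) ^ 2 + T ^ 2) / t ^ 3)) := by
    have h := (((gpdf.integrable_sq_mul μ T).add ((gpdf.integrable μ T).const_mul (T ^ 2))
      ).const_mul (C * (T / t) / t ^ 3))
    refine h.congr (ae_of_all _ fun a => ?_)
    simp only [Pi.add_apply]
    ring
  refine (hasDerivAt_integral_of_dominated_loc_of_deriv_le (s := Set.Icc t T)
    (Icc_mem_nhds htσ hσT)
    (.of_forall fun s => (hr.mul (gpdf.measurable μ s)).aestronglyMeasurable)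
    ((gpdf.integrable μ σ).bdd_mul hr.aestronglyMeasurable hr_bdd)
    (hr.mul ((gpdf.measurable μ σ).mul (by fun_prop))).aestronglyMeasurable
    (ae_of_all _ fun a s hs => ?_) hbound
    (ae_of_all _ fun a s hs => ((gpdf.hasDerivAt_sigma μ a (ht.trans_le hs.1)).const_mul _))).2
  rw [norm_mul, norm_mul, Real.norm_eq_abs, Real.norm_eq_abs, Real.norm_eq_abs,
    abs_of_nonneg (gpdf.nonneg μ s a)]
  exact mul_le_mul (hC a)
    (mul_le_mul (gpdf.le_div_mul_of_le_of_le μ a ht hs.1 hs.2)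
      (abs_sub_sq_div_pow_three_le ht hs.1 hs.2)
      (abs_nonneg _) (mul_nonneg (div_nonneg (by linarith) ht.le) (gpdf.nonneg μ T a)))
    (mul_nonneg (gpdf.nonneg μ s a) (abs_nonneg _)) hC0

theorem stmt0_general (r_max : ℝ) (r : ℝ → ℝ) (hmeas : Measurable r)
    (hbd : ∀ a, |r a| ≤ r_max) (μ : ℝ) :
    (∀ σ ∈ Set.Ioi (0 : ℝ),
      DifferentiableAt ℝ (fun σ' => ∫ a, r a * gpdf μ σ' a) σ) ∧
    (∀ σ : ℝ, 0 < σ →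
      σ * deriv (fun σ' => ∫ a, r a * gpdf μ σ' a) σ
        = ∫ b, r (σ * b + μ) * (b ^ 2 - 1) * gpdf 0 1 b) := by
  refine ⟨fun σ hσ => (hasDerivAt_integral_mul_gpdf hmeas hbd μ hσ).differentiableAt,
    fun σ hσ => ?_⟩
  rw [(hasDerivAt_integral_mul_gpdf hmeas hbd μ hσ).deriv]
  set F := fun a => r a * (gpdf μ σ a * (((a - μ) ^ 2 - σ ^ 2) / σ ^ 3))
  have hintegrand : ∀ b, r (σ * b + μ) * (b ^ 2 - 1) * gpdf 0 1 b = σ ^ 2 * F (σ * b + μ) :=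
    fun b => by
      simp only [F, gpdf.comp_mul_add hσ, add_sub_cancel_right]
      field_simp
  simp_rw [hintegrand, integral_const_mul, integral_comp_mul_add_of_pos F hσ, smul_eq_mul]
  field_simp

/-- for bounded measurable `r`, `g(σ) = ∫ r(a) φ(a; μ, σ) da` is
differentiable on `(0, ∞)` and `σ·g′(σ) = ∫ r(σb+μ)(b²−1) φ(b;0,1) db`. -/
theorem stmt0 (r_max : ℝ) (hrmax : 0 ≤ r_max) (r : ℝ → ℝ) (hmeas : Measurable r)
    (hbd : ∀ a, |r a| ≤ r_max) (μ : ℝ) :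
    (∀ σ ∈ Set.Ioi (0 : ℝ),
      DifferentiableAt ℝ (fun σ' => ∫ a, r a * gpdf μ σ' a) σ) ∧
    (∀ σ : ℝ, 0 < σ →
      σ * deriv (fun σ' => ∫ a, r a * gpdf μ σ' a) σ
        = ∫ b, r (σ * b + μ) * (b ^ 2 - 1) * gpdf 0 1 b) :=
  stmt0_general r_max r hmeas hbd μ
end

section
/- Let r_max ≥ 0, let r : ℝ → ℝ be measurable with |r(a)| ≤ r_max for all a ∈ ℝ, and let α > 2·r_max. Define J(μ, σ) = ∫ (r(a) − α·log φ(a; μ, σ))·φ(a; μ, σ) da for (μ, σ) ∈ ℝ × (0, ∞). Then for every μ ∈ ℝ and σ > 0 the partial derivative of J with respect to σ exists and is strictly positive; in particular J has no stationary point, i.e., there is no (μ, σ) ∈ ℝ × (0, ∞) at which both partial derivatives of J (with respect to μ and to σ) exist and vanish. -/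
/-!
Since `log φ(a; μ, σ) = -(a - μ)²/(2σ²) - log σ - log(2π)/2` and `N(μ, σ²)` has variance `σ²`,
`J(μ, σ) = ∫ r φ + α (log σ + (1 + log 2π)/2)`: the entropy part contributes `α/σ` to `∂J/∂σ`.
The reward part is differentiated under the integral sign, with
`∂φ/∂σ = φ · ((a - μ)²/σ³ - 1/σ)`. As `∫ |∂φ/∂σ| ≤ ∫ φ · ((a - μ)²/σ³ + 1/σ) = 2/σ`, its
derivative is at least `-2 r_max/σ`, hence `∂J/∂σ ≥ (α - 2 r_max)/σ > 0`.
-/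

open MeasureTheory Real

/-- The entropy-regularized Gaussian objective
`J(μ, σ) = ∫ (r(a) − α·log φ(a; μ, σ)) · φ(a; μ, σ) da`. -/
noncomputable def Jgauss (r : ℝ → ℝ) (α μ σ : ℝ) : ℝ :=
  ∫ a, (r a - α * Real.log (gpdf μ σ a)) * gpdf μ σ a

open Filter Set ProbabilityTheory

lemma gpdf_eq_gaussianPDFReal (m s : ℝ) : gpdf m s = gaussianPDFReal m (s ^ 2).toNNReal := by
  ext a
  simp [gpdf, gaussianPDFReal, Real.coe_toNNReal _ (sq_nonneg s)]

lemma toNNReal_sq_ne_zero {s : ℝ} (hs : s ≠ 0) : (s ^ 2).toNNReal ≠ 0 := by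
  simpa [Real.toNNReal_eq_zero, not_le] using hs

lemma gpdf_nonneg (m s a : ℝ) : 0 ≤ gpdf m s a := by
  unfold gpdf; positivity

lemma integrable_gpdf (m s : ℝ) : Integrable (gpdf m s) := by
  rw [gpdf_eq_gaussianPDFReal]; exact integrable_gaussianPDFReal _ _

lemma integral_gpdf_mul (m : ℝ) {s : ℝ} (hs : s ≠ 0) (f : ℝ → ℝ) :
    ∫ a, gpdf m s a * f a = ∫ a, f a ∂gaussianReal m (s ^ 2).toNNReal := by
  rw [integral_gaussianReal_eq_integral_smul (toNNReal_sq_ne_zero hs), gpdf_eq_gaussianPDFReal]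
  rfl

lemma integrable_gpdf_mul_iff (m : ℝ) {s : ℝ} (hs : s ≠ 0) {f : ℝ → ℝ} :
    Integrable (fun a => gpdf m s a * f a) ↔ Integrable f (gaussianReal m (s ^ 2).toNNReal) := by
  rw [gaussianReal_of_var_ne_zero _ (toNNReal_sq_ne_zero hs), gaussianPDF_def,
    integrable_withDensity_iff_integrable_smul' (by fun_prop) (by simp), gpdf_eq_gaussianPDFReal]
  simp [ENNReal.toReal_ofReal (gaussianPDFReal_nonneg _ _ _)]

lemma integrable_sq_sub_gaussianReal (m : ℝ) (v : NNReal) :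
    Integrable (fun a => (a - m) ^ 2) (gaussianReal m v) :=
  ((memLp_id_gaussianReal 2).sub (memLp_const m)).integrable_sq

lemma integrable_gpdf_mul_sq_add (m : ℝ) {s : ℝ} (hs : s ≠ 0) (b c : ℝ) :
    Integrable (fun a => gpdf m s a * (b * (a - m) ^ 2 + c)) := by
  rw [integrable_gpdf_mul_iff m hs]
  exact ((integrable_sq_sub_gaussianReal m _).const_mul b).add (integrable_const c)

lemma integral_gpdf_mul_sq_add (m : ℝ) {s : ℝ} (hs : s ≠ 0) (b c : ℝ) :
    ∫ a, gpdf m s a * (b * (a - m) ^ 2 + c) = b * s ^ 2 + c := by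
  have hvar := variance_fun_id_gaussianReal (μ := m) (v := (s ^ 2).toNNReal)
  rw [variance_eq_integral aemeasurable_id', integral_id_gaussianReal,
    Real.coe_toNNReal _ (sq_nonneg s)] at hvar
  rw [integral_gpdf_mul m hs, integral_add ((integrable_sq_sub_gaussianReal m _).const_mul b)
    (integrable_const c), integral_const_mul, hvar]
  simp

lemma log_gpdf (m : ℝ) {s : ℝ} (hs : s ≠ 0) (a : ℝ) :
    Real.log (gpdf m s a) =
      -((2 * s ^ 2)⁻¹ * (a - m) ^ 2 + (Real.log s + Real.log (2 * π) / 2)) := by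
  rw [gpdf, Real.log_mul (by positivity) (Real.exp_ne_zero _), Real.log_inv, Real.log_exp,
    Real.log_sqrt (by positivity), Real.log_mul (by positivity) (by positivity), Real.log_pow]
  push_cast
  ring

lemma Jgauss_eq {r : ℝ → ℝ} (α m : ℝ) {s : ℝ} (hs : s ≠ 0)
    (hr : Integrable (fun a => r a * gpdf m s a)) :
    Jgauss r α m s =
      (∫ a, r a * gpdf m s a) + α * (Real.log s + (1 + Real.log (2 * π)) / 2) := by
  set c := Real.log s + Real.log (2 * π) / 2
  have hpt : ∀ a, (r a - α * Real.log (gpdf m s a)) * gpdf m s a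
      = r a * gpdf m s a + α * (gpdf m s a * ((2 * s ^ 2)⁻¹ * (a - m) ^ 2 + c)) := by
    intro a
    rw [log_gpdf m hs]
    ring
  simp_rw [Jgauss, hpt]
  rw [integral_add hr ((integrable_gpdf_mul_sq_add m hs _ _).const_mul α), integral_const_mul,
    integral_gpdf_mul_sq_add m hs]
  field_simp
  ring

noncomputable def gpdfScaleDeriv (m s a : ℝ) : ℝ := gpdf m s a * ((a - m) ^ 2 / s ^ 3 - 1 / s)

lemma gpdf_eq_of_pos (m : ℝ) {t : ℝ} (ht : 0 < t) (a : ℝ) :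
    gpdf m t a = (Real.sqrt (2 * π))⁻¹ * t⁻¹ * Real.exp (-(a - m) ^ 2 / 2 * (t ^ 2)⁻¹) := by
  rw [gpdf, Real.sqrt_mul (by positivity), Real.sqrt_sq ht.le, mul_inv]
  congr 2
  field_simp

lemma hasDerivAt_gpdf_scale (m a : ℝ) {t : ℝ} (ht : 0 < t) :
    HasDerivAt (fun t' => gpdf m t' a) (gpdfScaleDeriv m t a) t := by
  have hne : t ≠ 0 := ht.ne'
  have hprod := ((hasDerivAt_inv hne).const_mul (Real.sqrt (2 * π))⁻¹).fun_mul
    (((hasDerivAt_pow 2 t).fun_inv (pow_ne_zero 2 hne)).const_mul (-(a - m) ^ 2 / 2)).exp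
  have hloc : (fun t' => gpdf m t' a) =ᶠ[nhds t] fun t' =>
      (Real.sqrt (2 * π))⁻¹ * t'⁻¹ * Real.exp (-(a - m) ^ 2 / 2 * (t' ^ 2)⁻¹) := by
    filter_upwards [Ioi_mem_nhds ht] with t' ht'
    exact gpdf_eq_of_pos m ht' a
  refine (hprod.congr_deriv ?_).congr_of_eventuallyEq hloc
  rw [gpdfScaleDeriv, gpdf_eq_of_pos m ht]
  field_simp
  ring

lemma abs_gpdfScaleDeriv_le (m : ℝ) {s : ℝ} (hs : 0 < s) (a : ℝ) :
    |gpdfScaleDeriv m s a| ≤ gpdf m s a * ((s ^ 3)⁻¹ * (a - m) ^ 2 + s⁻¹) := by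
  rw [gpdfScaleDeriv, abs_mul, abs_of_nonneg (gpdf_nonneg m s a)]
  gcongr
  · exact gpdf_nonneg m s a
  have h1 : 0 ≤ (s ^ 3)⁻¹ * (a - m) ^ 2 := by positivity
  have h2 : 0 ≤ s⁻¹ := by positivity
  rw [abs_le, div_eq_inv_mul, one_div]
  constructor <;> linarith

lemma gpdf_le_mul_gpdf (m : ℝ) {x y : ℝ} (hx : 0 < x) (hxy : x ≤ y) (a : ℝ) :
    gpdf m x a ≤ y / x * gpdf m y a := by
  have hy := hx.trans_le hxy
  rw [gpdf_eq_of_pos m hx, gpdf_eq_of_pos m hy]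
  have hexp :
      Real.exp (-(a - m) ^ 2 / 2 * (x ^ 2)⁻¹) ≤ Real.exp (-(a - m) ^ 2 / 2 * (y ^ 2)⁻¹) :=
    exp_le_exp.mpr (mul_le_mul_of_nonpos_left (inv_anti₀ (by positivity) (by gcongr))
      (by linarith [sq_nonneg (a - m)]))
  calc (Real.sqrt (2 * π))⁻¹ * x⁻¹ * Real.exp (-(a - m) ^ 2 / 2 * (x ^ 2)⁻¹)
      ≤ (Real.sqrt (2 * π))⁻¹ * x⁻¹ * Real.exp (-(a - m) ^ 2 / 2 * (y ^ 2)⁻¹) := by gcongr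
    _ = y / x * ((Real.sqrt (2 * π))⁻¹ * y⁻¹ * Real.exp (-(a - m) ^ 2 / 2 * (y ^ 2)⁻¹)) := by
      field_simp

lemma abs_gpdfScaleDeriv_le_of_mem_Ioo (m : ℝ) {s x : ℝ} (hx : x ∈ Ioo (s / 2) (2 * s))
    (a : ℝ) :
    |gpdfScaleDeriv m x a| ≤ gpdf m (2 * s) a * (32 / s ^ 3 * (a - m) ^ 2 + 8 / s) := by
  obtain ⟨hsx, hxs⟩ := hx
  have hs : 0 < s := by linarith
  have hx : 0 < x := by linarith
  have hratio : 2 * s / x ≤ 4 := by rw [div_le_iff₀ hx]; linarith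
  have hinv : x⁻¹ ≤ 2 / s := by
    rw [inv_le_iff_one_le_mul₀ hx, div_mul_eq_mul_div, le_div_iff₀ hs]
    linarith
  have hinv3 : (x ^ 3)⁻¹ ≤ 8 / s ^ 3 := by
    rw [← inv_pow, show (8 : ℝ) / s ^ 3 = (2 / s) ^ 3 by ring]
    gcongr
  calc |gpdfScaleDeriv m x a| ≤ gpdf m x a * ((x ^ 3)⁻¹ * (a - m) ^ 2 + x⁻¹) :=
        abs_gpdfScaleDeriv_le m hx a
    _ ≤ (4 * gpdf m (2 * s) a) * (8 / s ^ 3 * (a - m) ^ 2 + 2 / s) := by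
        gcongr
        · exact mul_nonneg (by norm_num) (gpdf_nonneg _ _ _)
        · exact (gpdf_le_mul_gpdf m hx (y := 2 * s) (by linarith) a).trans
            (mul_le_mul_of_nonneg_right hratio (gpdf_nonneg _ _ _))
    _ = gpdf m (2 * s) a * (32 / s ^ 3 * (a - m) ^ 2 + 8 / s) := by ring

lemma measurable_gpdfScaleDeriv (m s : ℝ) : Measurable (gpdfScaleDeriv m s) := by
  unfold gpdfScaleDeriv gpdf
  fun_prop

section BoundedIntegrand

variable {r : ℝ → ℝ} {C : ℝ} (hr : ∀ a, |r a| ≤ C)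
include hr

lemma integrable_mul_gpdf (hr_meas : AEStronglyMeasurable r) (m s : ℝ) :
    Integrable (fun a => r a * gpdf m s a) :=
  (integrable_gpdf m s).bdd_mul hr_meas (Eventually.of_forall fun a => by simpa using hr a)

lemma hasDerivAt_integral_mul_gpdf_s2 (hr_meas : AEStronglyMeasurable r) (m : ℝ) {s : ℝ}
    (hs : 0 < s) :
    HasDerivAt (fun t => ∫ a, r a * gpdf m t a) (∫ a, r a * gpdfScaleDeriv m s a) s := by
  have hC : 0 ≤ C := (abs_nonneg _).trans (hr 0)
  have hnhds : Ioo (s / 2) (2 * s) ∈ nhds s := Ioo_mem_nhds (by linarith) (by linarith)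
  refine (hasDerivAt_integral_of_dominated_loc_of_deriv_le hnhds
    (F' := fun t a => r a * gpdfScaleDeriv m t a)
    (Eventually.of_forall fun t => (integrable_mul_gpdf hr hr_meas m t).aestronglyMeasurable)
    (integrable_mul_gpdf hr hr_meas m s)
    (hr_meas.mul (measurable_gpdfScaleDeriv m s).aestronglyMeasurable)
    (Eventually.of_forall fun a x hx => ?_)
    ((integrable_gpdf_mul_sq_add m (by positivity : 2 * s ≠ 0) (32 / s ^ 3) (8 / s)).const_mul C)
    (Eventually.of_forall fun a x hx => ?_)).2
  · rw [norm_mul, Real.norm_eq_abs, Real.norm_eq_abs]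
    exact mul_le_mul (hr a) (abs_gpdfScaleDeriv_le_of_mem_Ioo m hx a) (abs_nonneg _) hC
  · exact (hasDerivAt_gpdf_scale m a (by linarith [hx.1])).const_mul (r a)

lemma abs_integral_mul_gpdfScaleDeriv_le (m : ℝ) {s : ℝ} (hs : 0 < s) :
    |∫ a, r a * gpdfScaleDeriv m s a| ≤ 2 * C / s := by
  have hC : 0 ≤ C := (abs_nonneg _).trans (hr 0)
  have hbound : ∀ a, ‖r a * gpdfScaleDeriv m s a‖ ≤
      C * (gpdf m s a * ((s ^ 3)⁻¹ * (a - m) ^ 2 + s⁻¹)) := fun a => by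
    rw [norm_mul, Real.norm_eq_abs, Real.norm_eq_abs]
    exact mul_le_mul (hr a) (abs_gpdfScaleDeriv_le m hs a) (abs_nonneg _) hC
  refine (norm_integral_le_of_norm_le ((integrable_gpdf_mul_sq_add m hs.ne' _ _).const_mul C)
    (Eventually.of_forall hbound)).trans_eq ?_
  rw [integral_const_mul, integral_gpdf_mul_sq_add m hs.ne']
  field_simp
  ring

lemma hasDerivAt_Jgauss_scale (hr_meas : AEStronglyMeasurable r) (α m : ℝ) {s : ℝ}
    (hs : 0 < s) :
    HasDerivAt (fun t => Jgauss r α m t) ((∫ a, r a * gpdfScaleDeriv m s a) + α / s) s := by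
  have hJ : (fun t => Jgauss r α m t) =ᶠ[nhds s] fun t =>
      (∫ a, r a * gpdf m t a) + α * (Real.log t + (1 + Real.log (2 * π)) / 2) := by
    filter_upwards [Ioi_mem_nhds hs] with t ht
    exact Jgauss_eq α m (ne_of_gt ht) (integrable_mul_gpdf hr hr_meas m t)
  have hlog : HasDerivAt (fun t => α * (Real.log t + (1 + Real.log (2 * π)) / 2)) (α / s) s := by
    simpa [div_eq_mul_inv] using ((Real.hasDerivAt_log hs.ne').add_const _).const_mul α
  exact ((hasDerivAt_integral_mul_gpdf_s2 hr hr_meas m hs).add hlog).congr_of_eventuallyEq hJ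

end BoundedIntegrand

theorem stmt2_general (r_max : ℝ) (r : ℝ → ℝ) (hmeas : Measurable r)
    (hbd : ∀ a, |r a| ≤ r_max) (α : ℝ) (hα : 2 * r_max < α) :
    (∀ (μ σ : ℝ), 0 < σ →
      DifferentiableAt ℝ (fun σ' => Jgauss r α μ σ') σ ∧
      0 < deriv (fun σ' => Jgauss r α μ σ') σ) ∧
    ¬ ∃ (μ σ : ℝ), 0 < σ ∧
      (DifferentiableAt ℝ (fun μ' => Jgauss r α μ' σ) μ ∧
        deriv (fun μ' => Jgauss r α μ' σ) μ = 0) ∧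
      (DifferentiableAt ℝ (fun σ' => Jgauss r α μ σ') σ ∧
        deriv (fun σ' => Jgauss r α μ σ') σ = 0) := by
  have hscale : ∀ (μ σ : ℝ), 0 < σ →
      DifferentiableAt ℝ (fun σ' => Jgauss r α μ σ') σ ∧
      0 < deriv (fun σ' => Jgauss r α μ σ') σ := by
    intro μ σ hσ
    have hJ := hasDerivAt_Jgauss_scale hbd hmeas.aestronglyMeasurable α μ hσ
    have hbound := abs_le.mp (abs_integral_mul_gpdfScaleDeriv_le hbd μ hσ)
    have hgap : 2 * r_max / σ < α / σ := div_lt_div_of_pos_right hα hσ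
    exact ⟨hJ.differentiableAt, hJ.deriv ▸ by linarith [hbound.1]⟩
  refine ⟨hscale, ?_⟩
  rintro ⟨μ, σ, hσ, -, -, hderiv⟩
  exact (hscale μ σ hσ).2.ne' hderiv

/-- if `|r| ≤ r_max` and `α > 2·r_max`, then `∂J/∂σ` exists and is
strictly positive everywhere on `ℝ × (0, ∞)`; in particular `J` has no stationary
point. -/
theorem stmt2 (r_max : ℝ) (hrmax : 0 ≤ r_max) (r : ℝ → ℝ) (hmeas : Measurable r)
    (hbd : ∀ a, |r a| ≤ r_max) (α : ℝ) (hα : 2 * r_max < α) :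
    (∀ (μ σ : ℝ), 0 < σ →
      DifferentiableAt ℝ (fun σ' => Jgauss r α μ σ') σ ∧
      0 < deriv (fun σ' => Jgauss r α μ σ') σ) ∧
    ¬ ∃ (μ σ : ℝ), 0 < σ ∧
      (DifferentiableAt ℝ (fun μ' => Jgauss r α μ' σ) μ ∧
        deriv (fun μ' => Jgauss r α μ' σ) μ = 0) ∧
      (DifferentiableAt ℝ (fun σ' => Jgauss r α μ σ') σ ∧
        deriv (fun σ' => Jgauss r α μ σ') σ = 0) :=
  stmt2_general r_max r hmeas hbd α hα
end

section
/- Let r : ℝ → ℝ be bounded and measurable and let N ≥ 1. Define A^b = { α > 0 : the Gaussian objective J^b_α has no stationary point } and A^m = { α > 0 : the N-component mixture objective J^m_α has no stationary point }. Then A^m ⊆ A^b; consequently, if A^m is nonempty then inf A^m ≥ inf A^b. -/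
open MeasureTheory Real

/-- Entropy-regularized bandit objective under the Gaussian parameterization:
`J^b_α(μ, σ) = ∫ (r(a) − α·log φ(a; μ, σ)) · φ(a; μ, σ) da`. -/
noncomputable def Jb (r : ℝ → ℝ) (α μ σ : ℝ) : ℝ :=
  ∫ a, (r a - α * Real.log (gpdf μ σ a)) * gpdf μ σ a

/-- Softmax weights `w_k = exp(η_k) / Σ_j exp(η_j)`. -/
noncomputable def softmaxW {N : ℕ} (η : Fin N → ℝ) (k : Fin N) : ℝ :=
  Real.exp (η k) / ∑ j, Real.exp (η j)

/-- Mixture density with softmax weights: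
`m(a) = Σ_k w_k · φ(a; μ_k, σ_k)`. -/
noncomputable def mixDensity {N : ℕ} (μs σs η : Fin N → ℝ) (a : ℝ) : ℝ :=
  ∑ k, softmaxW η k * gpdf (μs k) (σs k) a

/-- Entropy-regularized bandit objective under the `N`-component mixture
parameterization. -/
noncomputable def Jm (r : ℝ → ℝ) (α : ℝ) {N : ℕ} (μs σs η : Fin N → ℝ) : ℝ :=
  ∫ a, (r a - α * Real.log (mixDensity μs σs η a)) * mixDensity μs σs η a

/-- `(μ, σ)` (with `σ > 0`) is a stationary point of `J^b_α`: both partial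
derivatives exist and vanish. -/
def IsStatB (r : ℝ → ℝ) (α μ σ : ℝ) : Prop :=
  0 < σ ∧
  (DifferentiableAt ℝ (fun x => Jb r α x σ) μ ∧ deriv (fun x => Jb r α x σ) μ = 0) ∧
  (DifferentiableAt ℝ (fun x => Jb r α μ x) σ ∧ deriv (fun x => Jb r α μ x) σ = 0)

/-- `(μs, σs, η)` (with all `σs k > 0`) is a stationary point of `J^m_α`: all
`3N` partial derivatives exist and vanish. -/
def IsStatM (r : ℝ → ℝ) (α : ℝ) {N : ℕ} (μs σs η : Fin N → ℝ) : Prop :=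
  (∀ k, 0 < σs k) ∧
  ∀ k : Fin N,
    (DifferentiableAt ℝ (fun x => Jm r α (Function.update μs k x) σs η) (μs k) ∧
      deriv (fun x => Jm r α (Function.update μs k x) σs η) (μs k) = 0) ∧
    (DifferentiableAt ℝ (fun x => Jm r α μs (Function.update σs k x) η) (σs k) ∧
      deriv (fun x => Jm r α μs (Function.update σs k x) η) (σs k) = 0) ∧
    (DifferentiableAt ℝ (fun x => Jm r α μs σs (Function.update η k x)) (η k) ∧
      deriv (fun x => Jm r α μs σs (Function.update η k x)) (η k) = 0)

/-!
Put every mixture component at a Gaussian stationary point `(μ, σ)`, with arbitrary weights. The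
mixture is then `φ(·; μ, σ)` whatever the weights are, so the weight partials vanish. Moving the
mean or scale of component `k` alone turns the density into `w_k φ_x + (1 - w_k) φ`, and
differentiating under the integral sign at the base point, where this density is `φ`, gives
`w_k` times the corresponding Gaussian partial, which is zero. Differentiation under the integral
is justified by Gaussian envelopes: near the base point the density lies between two Gaussians,
so its logarithm grows at most quadratically and the differentiated integrand is dominated by a
polynomial times a Gaussian. The inclusion `A^m ⊆ A^b` follows, and since `A^b` is bounded
below by `0`, so does the inequality between infima.
-/

open Filter Metric Topology

noncomputable def entropyObjective (r : ℝ → ℝ) (α : ℝ) (p : ℝ → ℝ) : ℝ :=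
  ∫ a, (r a - α * log (p a)) * p a

lemma abs_sub_mul_sub_le {y L c C ℓ α : ℝ} (hy : |y| ≤ C) (hL : |L| ≤ ℓ) (hc : |c| ≤ |α|) :
    |y - α * L - c| ≤ (C + |α|) * (1 + ℓ) := by
  have hC : 0 ≤ C := (abs_nonneg y).trans hy
  have hℓ : 0 ≤ ℓ := (abs_nonneg L).trans hL
  calc |y - α * L - c| ≤ |y| + |α| * |L| + |c| := by
        rw [← abs_mul]; exact (abs_sub _ _).trans (add_le_add_left (abs_sub _ _) _)
    _ ≤ C + |α| * ℓ + |α| := by gcongr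
    _ ≤ (C + |α|) * (1 + ℓ) := by nlinarith [abs_nonneg α]

theorem hasDerivAt_entropyObjective {r : ℝ → ℝ} (hr : Measurable r) {C : ℝ}
    (hbd : ∀ a, |r a| ≤ C) (α : ℝ) {m m' : ℝ → ℝ → ℝ} {x₀ : ℝ} {s : Set ℝ} (hs : s ∈ 𝓝 x₀)
    {ℓ b : ℝ → ℝ} (hm_meas : ∀ x, Measurable (m x)) (hm'_meas : Measurable (m' x₀))
    (hm_pos : ∀ x ∈ s, ∀ a, 0 < m x a) (hm_le : ∀ a, m x₀ a ≤ b a)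
    (hlog : ∀ x ∈ s, ∀ a, |log (m x a)| ≤ ℓ a) (hm' : ∀ x ∈ s, ∀ a, |m' x a| ≤ b a)
    (hint : Integrable (fun a => (1 + ℓ a) * b a))
    (hderiv : ∀ x ∈ s, ∀ a, HasDerivAt (m · a) (m' x a) x) :
    HasDerivAt (fun x => entropyObjective r α (m x))
      (∫ a, (r a - α * log (m x₀ a) - α) * m' x₀ a) x₀ := by
  have hx₀ : x₀ ∈ s := mem_of_mem_nhds hs
  have hC : 0 ≤ C := (abs_nonneg (r 0)).trans (hbd 0)
  have hK : ∀ a, 0 ≤ (C + |α|) * (1 + ℓ a) := fun a =>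
    mul_nonneg (by positivity) (by linarith [(abs_nonneg _).trans (hlog x₀ hx₀ a)])
  have hF_int : Integrable (fun a => (r a - α * log (m x₀ a)) * m x₀ a) := by
    refine (hint.const_mul (C + |α|)).mono' (by fun_prop) (Eventually.of_forall fun a => ?_)
    have h := abs_sub_mul_sub_le (α := α) (c := 0) (hbd a) (hlog x₀ hx₀ a) (by simp)
    rw [sub_zero] at h
    rw [norm_mul, norm_of_nonneg (hm_pos x₀ hx₀ a).le, ← mul_assoc]
    exact mul_le_mul h (hm_le a) (hm_pos x₀ hx₀ a).le (hK a)
  refine (hasDerivAt_integral_of_dominated_loc_of_deriv_le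
    (F := fun x a => (r a - α * log (m x a)) * m x a)
    (F' := fun x a => (r a - α * log (m x a) - α) * m' x a) hs
    (Eventually.of_forall fun x => by fun_prop) hF_int (by fun_prop)
    (Eventually.of_forall fun a x hx => ?_) (hint.const_mul (C + |α|))
    (Eventually.of_forall fun a x hx => ?_)).2
  · rw [norm_mul, ← mul_assoc]
    exact mul_le_mul (abs_sub_mul_sub_le (hbd a) (hlog x hx a) le_rfl) (hm' x hx a)
      (abs_nonneg _) (hK a)
  · have hpos := hm_pos x hx a
    have h := ((((hderiv x hx a).log hpos.ne').const_mul α).const_sub (r a)).mul (hderiv x hx a)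
    refine h.congr_deriv ?_
    field_simp
    ring

lemma integrable_pow_mul_exp_neg_mul_sq {b : ℝ} (hb : 0 < b) (n : ℕ) :
    Integrable fun x : ℝ => x ^ n * exp (-b * x ^ 2) := by
  simpa [rpow_natCast] using
    integrable_rpow_mul_exp_neg_mul_sq hb (s := n) (by linarith [n.cast_nonneg (α := ℝ)])

lemma integrable_quartic_mul_exp_neg_mul_sq {b : ℝ} (hb : 0 < b) (c₀ c₁ c₂ c : ℝ) :
    Integrable fun a : ℝ =>
      (c₀ + c₁ * (a - c) ^ 2 + c₂ * (a - c) ^ 4) * exp (-b * (a - c) ^ 2) := by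
  have h (n : ℕ) (k : ℝ) : Integrable fun a : ℝ => k * ((a - c) ^ n * exp (-b * (a - c) ^ 2)) :=
    ((integrable_pow_mul_exp_neg_mul_sq hb n).comp_sub_right c).const_mul k
  refine (((h 0 c₀).add (h 2 c₁)).add (h 4 c₂)).congr (Eventually.of_forall fun a => ?_)
  simp only [Pi.add_apply]
  ring

lemma abs_log_le_of_mul_exp_neg_le {p L U q : ℝ} (hL : 0 < L) (hq : 0 ≤ q)
    (hlo : L * exp (-q) ≤ p) (hhi : p ≤ U) : |log p| ≤ |log U| + |log L| + q := by
  have hp : 0 < p := (by positivity : 0 < L * exp (-q)).trans_le hlo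
  have hup : log p ≤ log U := log_le_log hp hhi
  have hdown : log L - q ≤ log p := by
    simpa [log_mul hL.ne' (exp_pos _).ne'] using log_le_log (by positivity) hlo
  rw [abs_le]
  constructor <;> linarith [le_abs_self (log U), neg_abs_le (log L), abs_nonneg (log U),
    abs_nonneg (log L)]

lemma gpdf_pos {σ : ℝ} (hσ : 0 < σ) (μ a : ℝ) : 0 < gpdf μ σ a := by
  unfold gpdf
  positivity

@[fun_prop]
lemma measurable_gpdf (μ σ : ℝ) : Measurable (gpdf μ σ) := by
  unfold gpdf
  fun_prop

lemma gpdf_eq {σ : ℝ} (hσ : 0 < σ) (μ a : ℝ) :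
    gpdf μ σ a = (√(2 * π) * σ)⁻¹ * exp (-(a - μ) ^ 2 / (2 * σ ^ 2)) := by
  rw [gpdf, sqrt_mul (by positivity), sqrt_sq hσ.le, neg_div]

lemma hasDerivAt_gpdf_mean (σ a x : ℝ) :
    HasDerivAt (fun y => gpdf y σ a) ((a - x) / σ ^ 2 * gpdf x σ a) x := by
  have h := ((((hasDerivAt_id x).const_sub a).pow 2).neg.div_const (2 * σ ^ 2)).exp.const_mul
    (√(2 * π * σ ^ 2))⁻¹
  simp only [Pi.pow_apply, Pi.neg_apply, id] at h
  refine h.congr_deriv ?_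
  simp only [gpdf]
  ring

lemma hasDerivAt_gpdf_scale_s6 (μ a : ℝ) {x : ℝ} (hx : 0 < x) :
    HasDerivAt (fun y => gpdf μ y a) (((a - μ) ^ 2 / x ^ 3 - 1 / x) * gpdf μ x a) x := by
  have h := ((hasDerivAt_inv hx.ne').mul
    ((((hasDerivAt_pow 2 x).inv (by positivity)).const_mul (-(a - μ) ^ 2 / 2)).exp)).const_mul
    (√(2 * π))⁻¹
  simp only [Pi.mul_apply, Pi.inv_apply] at h
  have heq : (fun y => gpdf μ y a) =ᶠ[𝓝 x]
      fun y => (√(2 * π))⁻¹ * (y⁻¹ * exp (-(a - μ) ^ 2 / 2 * (y ^ 2)⁻¹)) := by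
    filter_upwards [eventually_gt_nhds hx] with y hy
    rw [gpdf_eq hy, mul_inv]
    ring_nf
  refine (h.congr_of_eventuallyEq heq).congr_deriv ?_
  rw [gpdf_eq hx]
  field_simp
  ring

section Envelope

variable {μ σ w x s : ℝ}

lemma gpdf_le_envelope (hσ : 0 < σ) (hx : |x - μ| ≤ 1) (hs₁ : σ / 2 ≤ s) (hs₂ : s ≤ 2 * σ)
    (a : ℝ) :
    gpdf x s a ≤
      2 * exp (2 / σ ^ 2) / (√(2 * π) * σ) * exp (-(1 / (16 * σ ^ 2)) * (a - μ) ^ 2) := by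
  have hs : 0 < s := by linarith
  have hπ : 0 < √(2 * π) := by positivity
  have hd : (x - μ) ^ 2 ≤ 1 := sq_le_one_iff_abs_le_one _ |>.mpr hx
  have key : s ^ 2 * (a - μ) ^ 2 ≤ 32 * s ^ 2 + 8 * σ ^ 2 * (a - x) ^ 2 := by
    nlinarith [mul_le_mul_of_nonneg_left (show (a - μ) ^ 2 ≤ 2 * (a - x) ^ 2 + 2 by
      nlinarith [sq_nonneg (a - x - (x - μ))]) (sq_nonneg s),
      mul_le_mul_of_nonneg_right (show s ^ 2 ≤ 4 * σ ^ 2 by nlinarith) (sq_nonneg (a - x))]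
  rw [gpdf_eq hs]
  calc _ ≤ 2 / (√(2 * π) * σ) * exp (2 / σ ^ 2 + -(1 / (16 * σ ^ 2)) * (a - μ) ^ 2) :=
        mul_le_mul ?_ (exp_le_exp.mpr ?_) (exp_pos _).le (by positivity)
    _ = _ := by rw [exp_add]; ring
  · rw [inv_eq_one_div, div_le_div_iff₀ (by positivity) (by positivity)]
    nlinarith
  · rw [← sub_nonneg]
    have h : 2 / σ ^ 2 + -(1 / (16 * σ ^ 2)) * (a - μ) ^ 2 - -(a - x) ^ 2 / (2 * s ^ 2)
        = (32 * s ^ 2 + 8 * σ ^ 2 * (a - x) ^ 2 - s ^ 2 * (a - μ) ^ 2) / (16 * σ ^ 2 * s ^ 2) := by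
      field_simp
      ring
    rw [h]
    exact div_nonneg (by linarith) (by positivity)

lemma envelope_le_gpdf (hσ : 0 < σ) (hx : |x - μ| ≤ 1) (hs₁ : σ / 2 ≤ s) (hs₂ : s ≤ 2 * σ)
    (a : ℝ) :
    exp (-(4 / σ ^ 2)) / (2 * √(2 * π) * σ) * exp (-(4 / σ ^ 2) * (a - μ) ^ 2) ≤ gpdf x s a := by
  have hs : 0 < s := by linarith
  have hπ : 0 < √(2 * π) := by positivity
  have hd : (x - μ) ^ 2 ≤ 1 := sq_le_one_iff_abs_le_one _ |>.mpr hx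
  have key : σ ^ 2 * (a - x) ^ 2 ≤ 8 * s ^ 2 * (1 + (a - μ) ^ 2) := by
    nlinarith [mul_le_mul_of_nonneg_left (show (a - x) ^ 2 ≤ 2 * (a - μ) ^ 2 + 2 by
      nlinarith [sq_nonneg (a - μ + (x - μ))]) (sq_nonneg σ),
      mul_le_mul_of_nonneg_right (show σ ^ 2 ≤ 4 * s ^ 2 by nlinarith)
        (by positivity : (0 : ℝ) ≤ 2 * (a - μ) ^ 2 + 2)]
  rw [gpdf_eq hs]
  calc _ = 1 / (2 * √(2 * π) * σ) * exp (-(4 / σ ^ 2) * (a - μ) ^ 2 + -(4 / σ ^ 2)) := by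
        rw [exp_add]; ring
    _ ≤ _ := mul_le_mul ?_ (exp_le_exp.mpr ?_) (exp_pos _).le (by positivity)
  · rw [inv_eq_one_div, div_le_div_iff₀ (by positivity) (by positivity)]
    nlinarith
  · rw [← sub_nonneg]
    have h : -(a - x) ^ 2 / (2 * s ^ 2) - (-(4 / σ ^ 2) * (a - μ) ^ 2 + -(4 / σ ^ 2))
        = (8 * s ^ 2 * (1 + (a - μ) ^ 2) - σ ^ 2 * (a - x) ^ 2) / (2 * σ ^ 2 * s ^ 2) := by
      field_simp
      ring
    rw [h]
    exact div_nonneg (by linarith) (by positivity)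


lemma gpdf_mix_le_envelope (hσ : 0 < σ) (hw₀ : 0 ≤ w) (hw₁ : w ≤ 1) (hx : |x - μ| ≤ 1)
    (hs₁ : σ / 2 ≤ s) (hs₂ : s ≤ 2 * σ) (a : ℝ) :
    w * gpdf x s a + (1 - w) * gpdf μ σ a ≤
      2 * exp (2 / σ ^ 2) / (√(2 * π) * σ) * exp (-(1 / (16 * σ ^ 2)) * (a - μ) ^ 2) := by
  have h := gpdf_le_envelope hσ hx hs₁ hs₂ a
  have h₀ := gpdf_le_envelope (μ := μ) (x := μ) (s := σ) hσ (by simp) (by linarith)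
    (by linarith) a
  nlinarith

lemma envelope_le_gpdf_mix (hσ : 0 < σ) (hw₀ : 0 ≤ w) (hw₁ : w ≤ 1) (hx : |x - μ| ≤ 1)
    (hs₁ : σ / 2 ≤ s) (hs₂ : s ≤ 2 * σ) (a : ℝ) :
    w * (exp (-(4 / σ ^ 2)) / (2 * √(2 * π) * σ)) * exp (-(4 / σ ^ 2 * (a - μ) ^ 2)) ≤
      w * gpdf x s a + (1 - w) * gpdf μ σ a := by
  have h := envelope_le_gpdf hσ hx hs₁ hs₂ a
  have h₀ := gpdf_pos hσ μ a
  rw [neg_mul_eq_neg_mul]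
  nlinarith

lemma abs_log_gpdf_mix_le (hσ : 0 < σ) (hw₀ : 0 < w) (hw₁ : w ≤ 1) (hx : |x - μ| ≤ 1)
    (hs₁ : σ / 2 ≤ s) (hs₂ : s ≤ 2 * σ) (a : ℝ) :
    |log (w * gpdf x s a + (1 - w) * gpdf μ σ a)| ≤
      |log (2 * exp (2 / σ ^ 2) / (√(2 * π) * σ))| +
        |log (w * (exp (-(4 / σ ^ 2)) / (2 * √(2 * π) * σ)))| + 4 / σ ^ 2 * (a - μ) ^ 2 := by
  refine abs_log_le_of_mul_exp_neg_le (by positivity) (by positivity)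
    (envelope_le_gpdf_mix hσ hw₀.le hw₁ hx hs₁ hs₂ a) ?_
  refine (gpdf_mix_le_envelope hσ hw₀.le hw₁ hx hs₁ hs₂ a).trans
    (mul_le_of_le_one_right (by positivity) (exp_le_one_iff.mpr ?_))
  have : 0 ≤ 1 / (16 * σ ^ 2) * (a - μ) ^ 2 := by positivity
  linarith

end Envelope

theorem hasDerivAt_entropyObjective_gpdf_mix {r : ℝ → ℝ} (hr : Measurable r) {C : ℝ}
    (hbd : ∀ a, |r a| ≤ C) (α : ℝ) {μ σ w K x₀ ε : ℝ} (hσ : 0 < σ) (hw : 0 < w) (hw1 : w ≤ 1)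
    (hK : 0 ≤ K) (hε : 0 < ε) {c s : ℝ → ℝ} {g' : ℝ → ℝ → ℝ}
    (hbox : ∀ x ∈ ball x₀ ε, |c x - μ| ≤ 1 ∧ σ / 2 ≤ s x ∧ s x ≤ 2 * σ)
    (hc : c x₀ = μ) (hs : s x₀ = σ) (hg'_meas : Measurable (g' x₀))
    (hg' : ∀ x ∈ ball x₀ ε, ∀ a, |g' x a| ≤ K * (1 + (a - μ) ^ 2) * gpdf (c x) (s x) a)
    (hderiv : ∀ x ∈ ball x₀ ε, ∀ a, HasDerivAt (fun y => gpdf (c y) (s y) a) (g' x a) x) :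
    HasDerivAt
      (fun x => entropyObjective r α fun a => w * gpdf (c x) (s x) a + (1 - w) * gpdf μ σ a)
      (w * ∫ a, (r a - α * log (gpdf μ σ a) - α) * g' x₀ a) x₀ := by
  set U := 2 * exp (2 / σ ^ 2) / (√(2 * π) * σ)
  set A := |log U| + |log (w * (exp (-(4 / σ ^ 2)) / (2 * √(2 * π) * σ)))|
  set β := 1 / (16 * σ ^ 2)
  set γ := 4 / σ ^ 2
  have hx₀ : x₀ ∈ ball x₀ ε := mem_ball_self hε
  have h := hasDerivAt_entropyObjective hr hbd α (ball_mem_nhds x₀ hε)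
    (m := fun x a => w * gpdf (c x) (s x) a + (1 - w) * gpdf μ σ a)
    (m' := fun x a => w * g' x a) (ℓ := fun a => A + γ * (a - μ) ^ 2)
    (b := fun a => (K + 1) * U * ((1 + (a - μ) ^ 2) * exp (-β * (a - μ) ^ 2)))
    (by fun_prop) (by fun_prop) ?pos ?le
    (fun x hx a => by
      obtain ⟨h₁, h₂, h₃⟩ := hbox x hx
      exact abs_log_gpdf_mix_le hσ hw hw1 h₁ h₂ h₃ a)
    ?deriv_le ?int (fun x hx a => ((hderiv x hx a).const_mul w).add_const _)
  · simp only [hc, hs, ← add_mul, add_sub_cancel, one_mul] at h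
    convert h using 1
    rw [← integral_const_mul]
    congr 1 with a
    ring
  case pos =>
    intro x hx a
    obtain ⟨h₁, h₂, h₃⟩ := hbox x hx
    exact lt_of_lt_of_le (by positivity) (envelope_le_gpdf_mix hσ hw.le hw1 h₁ h₂ h₃ a)
  case le =>
    intro a
    obtain ⟨h₁, h₂, h₃⟩ := hbox x₀ hx₀
    have hb : 1 ≤ (K + 1) * (1 + (a - μ) ^ 2) := by nlinarith [sq_nonneg (a - μ)]
    calc _ ≤ U * exp (-β * (a - μ) ^ 2) := gpdf_mix_le_envelope hσ hw.le hw1 h₁ h₂ h₃ a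
      _ ≤ (K + 1) * (1 + (a - μ) ^ 2) * (U * exp (-β * (a - μ) ^ 2)) :=
        le_mul_of_one_le_left (by positivity) hb
      _ = _ := by ring
  case deriv_le =>
    intro x hx a
    obtain ⟨h₁, h₂, h₃⟩ := hbox x hx
    have henv := gpdf_le_envelope hσ h₁ h₂ h₃ a
    rw [abs_mul, abs_of_pos hw]
    calc w * |g' x a| ≤ 1 * (K * (1 + (a - μ) ^ 2) * gpdf (c x) (s x) a) :=
          mul_le_mul hw1 (hg' x hx a) (abs_nonneg _) zero_le_one
      _ ≤ 1 * (K * (1 + (a - μ) ^ 2) * (U * exp (-β * (a - μ) ^ 2))) := by gcongr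
      _ ≤ _ := by
        nlinarith [(by positivity : 0 ≤ (1 + (a - μ) ^ 2) * (U * exp (-β * (a - μ) ^ 2)))]
  case int =>
    set D := (K + 1) * U
    refine (integrable_quartic_mul_exp_neg_mul_sq (b := β) (by positivity) (D * (1 + A))
      (D * (1 + A + γ)) (D * γ) μ).congr (Eventually.of_forall fun a => ?_)
    ring

section GaussianMixture

variable {r : ℝ → ℝ} {C : ℝ}

theorem hasDerivAt_entropyObjective_gpdf_mix_mean (hr : Measurable r) (hbd : ∀ a, |r a| ≤ C)
    (α μ : ℝ) {σ w : ℝ} (hσ : 0 < σ) (hw : 0 < w) (hw1 : w ≤ 1) :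
    HasDerivAt (fun x => entropyObjective r α fun a => w * gpdf x σ a + (1 - w) * gpdf μ σ a)
      (w * ∫ a, (r a - α * log (gpdf μ σ a) - α) * ((a - μ) / σ ^ 2 * gpdf μ σ a)) μ := by
  refine hasDerivAt_entropyObjective_gpdf_mix (c := id) (s := fun _ => σ) (K := 2 / σ ^ 2)
    hr hbd α hσ hw hw1 (by positivity) one_pos (fun x hx => ⟨?_, by linarith, by linarith⟩)
    rfl rfl    (by fun_prop) (fun x hx a => ?_) (fun x _ a => hasDerivAt_gpdf_mean σ a x)
  · simpa [dist_eq] using (mem_ball.mp hx).le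
  · have hxμ : |x - μ| ≤ 1 := by simpa [dist_eq] using (mem_ball.mp hx).le
    have hax : |a - x| ≤ 2 * (1 + (a - μ) ^ 2) := by
      calc |a - x| = |(a - μ) - (x - μ)| := by ring_nf
        _ ≤ |a - μ| + |x - μ| := abs_sub _ _
        _ ≤ 2 * (1 + (a - μ) ^ 2) := by nlinarith [sq_abs (a - μ), abs_nonneg (a - μ)]
    have hcoef : |(a - x) / σ ^ 2| ≤ 2 / σ ^ 2 * (1 + (a - μ) ^ 2) := by
      rw [abs_div, abs_of_pos (by positivity : 0 < σ ^ 2), div_mul_eq_mul_div]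
      gcongr
    rw [abs_mul, abs_of_pos (gpdf_pos hσ x a)]
    exact mul_le_mul_of_nonneg_right hcoef (gpdf_pos hσ x a).le

theorem hasDerivAt_entropyObjective_gpdf_mix_scale (hr : Measurable r) (hbd : ∀ a, |r a| ≤ C)
    (α μ : ℝ) {σ w : ℝ} (hσ : 0 < σ) (hw : 0 < w) (hw1 : w ≤ 1) :
    HasDerivAt (fun x => entropyObjective r α fun a => w * gpdf μ x a + (1 - w) * gpdf μ σ a)
      (w * ∫ a, (r a - α * log (gpdf μ σ a) - α) *
        (((a - μ) ^ 2 / σ ^ 3 - 1 / σ) * gpdf μ σ a)) σ := by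
  have hball : ∀ x ∈ ball σ (σ / 2), σ / 2 ≤ x ∧ x ≤ 2 * σ := fun x hx => by
    obtain ⟨h₁, h₂⟩ := abs_lt.mp (mem_ball.mp hx)
    constructor <;> linarith
  refine hasDerivAt_entropyObjective_gpdf_mix (c := fun _ => μ) (s := id)
    (K := 8 / σ ^ 3 + 2 / σ) hr hbd α hσ hw hw1 (by positivity) (half_pos hσ)
    (fun x hx => ⟨by simp, hball x hx⟩) rfl rfl (by fun_prop) (fun x hx a => ?_)
    (fun x hx a => hasDerivAt_gpdf_scale_s6 μ a (by linarith [hball x hx]))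
  obtain ⟨hx₁, hx₂⟩ := hball x hx
  have hx : 0 < x := by linarith
  have hcube : σ ^ 3 / 8 ≤ x ^ 3 := by
    calc σ ^ 3 / 8 = (σ / 2) ^ 3 := by ring
      _ ≤ x ^ 3 := by gcongr
  have hcoef : |(a - μ) ^ 2 / x ^ 3 - 1 / x| ≤ (8 / σ ^ 3 + 2 / σ) * (1 + (a - μ) ^ 2) := by
    calc |(a - μ) ^ 2 / x ^ 3 - 1 / x| ≤ (a - μ) ^ 2 / x ^ 3 + 1 / x := by
          rw [abs_le]; constructor <;> nlinarith [(by positivity : 0 ≤ (a - μ) ^ 2 / x ^ 3),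
            (by positivity : 0 ≤ 1 / x)]
      _ ≤ (a - μ) ^ 2 / (σ ^ 3 / 8) + 1 / (σ / 2) := by gcongr
      _ ≤ (8 / σ ^ 3 + 2 / σ) * (1 + (a - μ) ^ 2) := by
        have h : (a - μ) ^ 2 / (σ ^ 3 / 8) + 1 / (σ / 2) = 8 / σ ^ 3 * (a - μ) ^ 2 + 2 / σ := by
          ring
        rw [h]
        nlinarith [(by positivity : 0 ≤ 8 / σ ^ 3), (by positivity : 0 ≤ 2 / σ * (a - μ) ^ 2)]
  rw [id, abs_mul, abs_of_pos (gpdf_pos hx μ a)]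
  exact mul_le_mul_of_nonneg_right hcoef (gpdf_pos hx μ a).le

end GaussianMixture

section Softmax

variable {N : ℕ} (η : Fin N → ℝ) (k : Fin N)

lemma sum_softmaxW [Nonempty (Fin N)] : ∑ j, softmaxW η j = 1 := by
  simp only [softmaxW, ← Finset.sum_div]
  exact div_self (Finset.sum_pos (fun j _ => exp_pos (η j)) Finset.univ_nonempty).ne'

lemma softmaxW_pos : 0 < softmaxW η k :=
  div_pos (exp_pos _) (Finset.sum_pos (fun j _ => exp_pos (η j)) ⟨k, Finset.mem_univ k⟩)

lemma softmaxW_le_one : softmaxW η k ≤ 1 := by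
  have : Nonempty (Fin N) := ⟨k⟩
  rw [← sum_softmaxW η]
  exact Finset.single_le_sum (fun j _ => (softmaxW_pos η j).le) (Finset.mem_univ k)

end Softmax

lemma sum_mul_update_const {ι : Type*} [Fintype ι] [DecidableEq ι] (w : ι → ℝ) (F : ℝ → ℝ)
    (p q : ℝ) (k : ι) :
    ∑ j, w j * F (Function.update (fun _ => p) k q j) = w k * F q + (∑ j, w j - w k) * F p := by
  rw [← Finset.add_sum_erase _ _ (Finset.mem_univ k), Function.update_self,
    Finset.sum_congr rfl fun j hj => by rw [Function.update_of_ne (Finset.ne_of_mem_erase hj)],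
    ← Finset.sum_mul, Finset.sum_erase_eq_sub (Finset.mem_univ k)]

section Mixture

variable {N : ℕ} (μ σ : ℝ) (η : Fin N → ℝ)

lemma mixDensity_const [Nonempty (Fin N)] :
    mixDensity (fun _ => μ) (fun _ => σ) η = gpdf μ σ := by
  ext a
  simp only [mixDensity, ← Finset.sum_mul, sum_softmaxW, one_mul]

lemma mixDensity_update_mean (k : Fin N) (x : ℝ) :
    mixDensity (Function.update (fun _ => μ) k x) (fun _ => σ) η =
      fun a => softmaxW η k * gpdf x σ a + (1 - softmaxW η k) * gpdf μ σ a := by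
  have : Nonempty (Fin N) := ⟨k⟩
  ext a
  rw [← sum_softmaxW η]
  exact sum_mul_update_const (softmaxW η) (fun y => gpdf y σ a) μ x k

lemma mixDensity_update_scale (k : Fin N) (x : ℝ) :
    mixDensity (fun _ => μ) (Function.update (fun _ => σ) k x) η =
      fun a => softmaxW η k * gpdf μ x a + (1 - softmaxW η k) * gpdf μ σ a := by
  have : Nonempty (Fin N) := ⟨k⟩
  ext a
  rw [← sum_softmaxW η]
  exact sum_mul_update_const (softmaxW η) (fun y => gpdf μ y a) σ x k

end Mixture

lemma Jm_eq_entropyObjective (r : ℝ → ℝ) (α : ℝ) {N : ℕ} (μs σs η : Fin N → ℝ) :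
    Jm r α μs σs η = entropyObjective r α (mixDensity μs σs η) :=
  rfl

theorem IsStatB.isStatM_const {r : ℝ → ℝ} (hr : Measurable r) {C : ℝ} (hbd : ∀ a, |r a| ≤ C)
    {α μ σ : ℝ} (h : IsStatB r α μ σ) {N : ℕ} (η : Fin N → ℝ) :
    IsStatM r α (fun _ => μ) (fun _ => σ) η := by
  obtain ⟨hσ, ⟨-, hderiv_mean⟩, ⟨-, hderiv_scale⟩⟩ := h
  -- With weight `1` the perturbed mixture is the Gaussian itself.
  have hmean := hasDerivAt_entropyObjective_gpdf_mix_mean hr hbd α μ hσ one_pos le_rfl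
  have hscale := hasDerivAt_entropyObjective_gpdf_mix_scale hr hbd α μ hσ one_pos le_rfl
  simp only [one_mul, sub_self, zero_mul, add_zero] at hmean hscale
  have hI_mean := hmean.deriv.symm.trans hderiv_mean
  have hI_scale := hscale.deriv.symm.trans hderiv_scale
  refine ⟨fun _ => hσ, fun k => ⟨?_, ?_, ?_⟩⟩
  · have h := hasDerivAt_entropyObjective_gpdf_mix_mean hr hbd α μ hσ (softmaxW_pos η k)
      (softmaxW_le_one η k)
    rw [hI_mean, mul_zero] at h
    simp only [Jm_eq_entropyObjective, mixDensity_update_mean]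
    exact ⟨h.differentiableAt, h.deriv⟩
  · have h := hasDerivAt_entropyObjective_gpdf_mix_scale hr hbd α μ hσ (softmaxW_pos η k)
      (softmaxW_le_one η k)
    rw [hI_scale, mul_zero] at h
    simp only [Jm_eq_entropyObjective, mixDensity_update_scale]
    exact ⟨h.differentiableAt, h.deriv⟩
  · have : Nonempty (Fin N) := ⟨k⟩
    simp only [Jm, mixDensity_const]
    exact ⟨differentiableAt_const _, deriv_const _ _⟩

theorem stmt6_general (r : ℝ → ℝ) (hmeas : Measurable r) (C : ℝ) (hbd : ∀ a, |r a| ≤ C)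
    (N : ℕ) :
    {α : ℝ | 0 < α ∧ ¬ ∃ μs σs η : Fin N → ℝ, IsStatM r α μs σs η} ⊆
      {α : ℝ | 0 < α ∧ ¬ ∃ μ σ : ℝ, IsStatB r α μ σ} ∧
    ({α : ℝ | 0 < α ∧ ¬ ∃ μs σs η : Fin N → ℝ, IsStatM r α μs σs η}.Nonempty →
      sInf {α : ℝ | 0 < α ∧ ¬ ∃ μ σ : ℝ, IsStatB r α μ σ} ≤
        sInf {α : ℝ | 0 < α ∧ ¬ ∃ μs σs η : Fin N → ℝ, IsStatM r α μs σs η}) := by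
  have hsub : {α : ℝ | 0 < α ∧ ¬ ∃ μs σs η : Fin N → ℝ, IsStatM r α μs σs η} ⊆
      {α : ℝ | 0 < α ∧ ¬ ∃ μ σ : ℝ, IsStatB r α μ σ} := by
    rintro α ⟨hα, hnone⟩
    refine ⟨hα, fun ⟨μ, σ, hstat⟩ => hnone ?_⟩
    exact ⟨_, _, fun _ => 0, hstat.isStatM_const hmeas hbd _⟩
  exact ⟨hsub, fun hne => csInf_le_csInf ⟨0, fun _ hα => hα.1.le⟩ hne hsub⟩

/-- the set of entropy scales `α` at which the mixture objective
has no stationary point is contained in the corresponding set for the Gaussian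
objective; consequently, if the former is nonempty, its infimum is at least
that of the latter. -/
theorem stmt6 (r : ℝ → ℝ) (hmeas : Measurable r) (C : ℝ) (hbd : ∀ a, |r a| ≤ C)
    (N : ℕ) (hN : 1 ≤ N) :
    {α : ℝ | 0 < α ∧ ¬ ∃ μs σs η : Fin N → ℝ, IsStatM r α μs σs η} ⊆
      {α : ℝ | 0 < α ∧ ¬ ∃ μ σ : ℝ, IsStatB r α μ σ} ∧
    ({α : ℝ | 0 < α ∧ ¬ ∃ μs σs η : Fin N → ℝ, IsStatM r α μs σs η}.Nonempty →
      sInf {α : ℝ | 0 < α ∧ ¬ ∃ μ σ : ℝ, IsStatB r α μ σ} ≤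
        sInf {α : ℝ | 0 < α ∧ ¬ ∃ μs σs η : Fin N → ℝ, IsStatM r α μs σs η}) :=
  stmt6_general r hmeas C hbd N
end
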